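/- 𝔰𝔡(ℵ₀,ℵ₀) = 2^{ℵ₀}: the least number of subsets of 2^ω, each of finite string dimension, needed to cover 2^ω equals the continuum. Moreover there is a perfect set X ⊆ 2^ω such that a subset of X has finite string dimension if and only if it is finite. -/

import Mathlib

open Cardinal

/-- `F` shatters `A` if every function `A → Bool` extends to an element of `F`. -/
def Shatters {X : Type*} (F : Set (X → Bool)) (A : Set X) : Prop :=
  ∀ g : X → Bool, ∃ f ∈ F, ∀ a ∈ A, f a = g a

/-- The string dimension of `F`: the least cardinal `δ` such that `F` shatters no
set of cardinality `δ`. -/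
noncomputable def sdim {X : Type*} (F : Set (X → Bool)) : Cardinal :=
  sInf {δ : Cardinal | ∀ A : Set X, #A = δ → ¬ Shatters F A}

/-- `𝔰𝔡(δ,κ)`: the least cardinality of a family of subsets of `2^κ`, each of string
dimension `< δ`, whose union is all of `2^κ`. -/
noncomputable def StringCov (δ κ : Cardinal.{0}) : Cardinal.{0} :=
  sInf {c : Cardinal | ∃ 𝒜 : Set (Set (Quotient.out κ → Bool)),
    #𝒜 = c ∧ (∀ F ∈ 𝒜, sdim F < δ) ∧ ⋃₀ 𝒜 = Set.univ}

/-!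
Code a real `x ∈ 2^ω` by the values `S (x ↾ k)` of all predicates `S` on `2^k`, `k ∈ ω`. There are
countably many such predicates, so this is a continuous injection of `2^ω` into `2^ω`, and its
image `X` is perfect. Index `2^n` distinct points of `X` by the strings `v ∈ 2^n`; they are
separated at some level `k`, so the `n` coordinates given by the predicates `x_v ↾ k ↦ v j` are
shattered by them. Hence every infinite subset of `X` has infinite string dimension. A finite `F`
has string dimension at most `|F|`, since a shattered `A` needs `2^|A| ≤ |F|`. So a set of finite
string dimension meets `X` in a finite set, covering `X` takes `2^ℵ₀` of them, and the singletons
show that `2^ℵ₀` suffice.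
-/

open Set Function Filter Topology

section Perfect

variable {α β : Type*} [TopologicalSpace α] [TopologicalSpace β]

theorem Preperfect.image {C : Set α} (hC : Preperfect C) {f : α → β} (hf : Continuous f)
    (hinj : Injective f) : Preperfect (f '' C) := by
  rw [preperfect_iff_nhds] at hC ⊢
  rintro _ ⟨x, hx, rfl⟩ U hU
  obtain ⟨y, ⟨hyU, hyC⟩, hyx⟩ := hC x hx _ (hf.continuousAt.preimage_mem_nhds hU)
  exact ⟨f y, ⟨hyU, mem_image_of_mem f hyC⟩, hinj.ne hyx⟩

instance Pi.perfectSpace {ι : Type*} [Infinite ι] [Nontrivial α] : PerfectSpace (ι → α) := by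
  classical
  refine ⟨preperfect_iff_nhds.2 fun x _ U hU => ?_⟩
  choose y hy using fun i => exists_ne (x i)
  have hflip : Tendsto (fun i => update x i (y i)) cofinite (𝓝 x) :=
    tendsto_pi_nhds.2 fun j => tendsto_const_nhds.congr' <|
      (eventually_cofinite_ne j).mono fun i hij => (update_of_ne hij.symm _ _).symm
  obtain ⟨i, hi⟩ := (hflip.eventually_mem hU).exists
  exact ⟨_, ⟨hi, mem_univ _⟩, fun h => hy i (by simpa using congrFun h i)⟩

end Perfect

section Shatters

variable {X : Type*} {F F' : Set (X → Bool)} {A : Set X}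

theorem Shatters.mono (h : Shatters F A) (hF : F ⊆ F') : Shatters F' A := fun g =>
  let ⟨f, hf, hfg⟩ := h g
  ⟨f, hF hf, hfg⟩

theorem Shatters.two_power_le_mk (h : Shatters F A) : 2 ^ #A ≤ #F := by
  classical
  choose f hfF hfg using fun g : A → Bool => h fun x => if hx : x ∈ A then g ⟨x, hx⟩ else false
  have hinj : Injective fun g => (⟨f g, hfF g⟩ : F) := fun g g' hgg' => funext fun a => by
    simpa [hfg g a a.2, hfg g' a a.2] using congrFun (congrArg Subtype.val hgg') a
  simpa [power_def] using mk_le_of_injective hinj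

theorem sdim_le_mk (F : Set (X → Bool)) : sdim F ≤ #F :=
  csInf_le (OrderBot.bddBelow _) fun A hA hsh => (cantor #A).not_ge (hA ▸ hsh.two_power_le_mk)

theorem sdim_lt_aleph0_of_finite (hF : F.Finite) : sdim F < ℵ₀ :=
  (sdim_le_mk F).trans_lt hF.lt_aleph0

theorem le_sdim {c : Cardinal} (h : ∀ δ < c, ∃ A : Set X, #A = δ ∧ Shatters F A) :
    c ≤ sdim F := by
  -- no subset of `X` has cardinality `(#X)⁺`, so `sInf` is not taken over the empty set
  refine le_csInf ⟨Order.succ #X, fun A hA _ => (mk_set_le A).not_gt (hA ▸ Order.lt_succ _)⟩ ?_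
  intro δ hδ
  by_contra! hlt
  obtain ⟨A, hA, hsh⟩ := h δ hlt
  exact hδ A hA hsh

end Shatters

theorem exists_injective_restrict {ι β : Type*} [Finite ι] {x : ι → ℕ → β} (hx : Injective x) :
    ∃ k, Injective fun v (i : Fin k) => x v i := by
  have hsep : ∀ p : ι × ι, ∀ᶠ k in atTop, p.1 ≠ p.2 → ∃ i : Fin k, x p.1 i ≠ x p.2 i := by
    rintro ⟨v, w⟩
    by_cases hvw : v = w
    · exact .of_forall fun _ h => absurd hvw h
    obtain ⟨m, hm⟩ := ne_iff.1 (hx.ne hvw)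
    exact (eventually_gt_atTop m).mono fun k hk _ => ⟨⟨m, hk⟩, hm⟩
  obtain ⟨k, hk⟩ := (eventually_all.2 hsep).exists
  refine ⟨k, fun v w hvw => by_contra fun hne => ?_⟩
  obtain ⟨i, hi⟩ := hk (v, w) hne
  exact hi (congrFun hvw i)

abbrev LevelPred : Type := Σ k : ℕ, (Fin k → Bool) → Bool

instance : Infinite LevelPred :=
  Infinite.of_injective (fun k => ⟨k, fun _ => false⟩) fun _ _ h => congrArg Sigma.fst h

section Code

variable {D : Type*} (u : D ≃ LevelPred)

def code (x : ℕ → Bool) (d : D) : Bool :=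
  (u d).2 fun i => x i

@[simp]
theorem code_symm_apply (x : ℕ → Bool) (k : ℕ) (S : (Fin k → Bool) → Bool) :
    code u x (u.symm ⟨k, S⟩) = S fun i => x i := by
  rw [code, u.apply_symm_apply]

theorem code_injective : Injective (code u) := fun x y hxy => funext fun m => by
  simpa using congrFun hxy (u.symm ⟨m + 1, fun σ => σ (Fin.last m)⟩)

theorem continuous_code : Continuous (code u) :=
  continuous_pi fun d => continuous_of_discreteTopology.comp <|
    continuous_pi fun i : Fin (u d).1 => continuous_apply (i : ℕ)

theorem perfect_range_code : Perfect (range (code u)) := by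
  refine ⟨((continuous_code u).isClosedEmbedding (code_injective u)).isClosed_range, ?_⟩
  rw [← image_univ]
  exact PerfectSpace.univ_preperfect.image (continuous_code u) (code_injective u)

theorem exists_shatters_range_code_comp {n : ℕ} {x : (Fin n → Bool) → ℕ → Bool}
    (hx : Injective x) : ∃ B : Set D, #B = n ∧ Shatters (range (code u ∘ x)) B := by
  obtain ⟨k, hk⟩ := exists_injective_restrict hx
  set r := fun v (i : Fin k) => x v i
  -- `x v ↾ k` determines `v`, so `S j` can read off its bit `j`
  set S : Fin n → (Fin k → Bool) → Bool := fun j => extend r (fun v => v j) fun _ => false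
  have hS : ∀ j v, S j (r v) = v j := fun j v => hk.extend_apply _ _ v
  have hS_inj : Injective S := fun j j' h => by
    simpa [hS, eq_comm] using congrFun h (r fun t => decide (t = j))
  set b : Fin n → D := fun j => u.symm ⟨k, S j⟩
  have hb : Injective b := u.symm.injective.comp (sigma_mk_injective.comp hS_inj)
  refine ⟨range b, by simpa using mk_range_eq_of_injective hb,
    fun g => ⟨_, mem_range_self fun j => g (b j), ?_⟩⟩
  rintro _ ⟨j, rfl⟩
  simp only [comp_apply, b, code_symm_apply]
  exact hS j _

theorem exists_shatters_of_infinite_inter_range_code {A : Set (D → Bool)}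
    (hA : (A ∩ range (code u)).Infinite) (n : ℕ) : ∃ B : Set D, #B = n ∧ Shatters A B := by
  have := hA.to_subtype
  let e : (Fin n → Bool) ↪ ↥(A ∩ range (code u)) :=
    (Fintype.equivFin _).toEmbedding.trans (Fin.valEmbedding.trans (Infinite.natEmbedding _))
  choose x hx using fun v => (e v).2.2
  have hx_inj : Injective x := Injective.of_comp (f := code u) <| by
    simpa [comp_def, hx] using Subtype.val_injective.comp e.injective
  obtain ⟨B, hB, hsh⟩ := exists_shatters_range_code_comp u hx_inj
  exact ⟨B, hB, hsh.mono <| range_subset_iff.2 fun v => by simpa [hx] using (e v).2.1⟩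

theorem finite_inter_range_code_of_sdim_lt_aleph0 {A : Set (D → Bool)} (hA : sdim A < ℵ₀) :
    (A ∩ range (code u)).Finite := by
  by_contra hinf
  refine hA.not_ge (le_sdim fun δ hδ => ?_)
  obtain ⟨n, rfl⟩ := lt_aleph0.1 hδ
  exact exists_shatters_of_infinite_inter_range_code u hinf n

end Code

theorem two_power_aleph0_le_mk_of_sUnion_eq_univ {Y : Type} [Countable Y] [Infinite Y]
    {𝒜 : Set (Set (Y → Bool))} (h𝒜 : ∀ F ∈ 𝒜, sdim F < ℵ₀) (hcov : ⋃₀ 𝒜 = Set.univ) :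
    2 ^ ℵ₀ ≤ #𝒜 := by
  obtain ⟨u⟩ := nonempty_equiv_of_countable (α := Y) (β := LevelPred)
  have hfin : ∀ F : 𝒜, (code u ⁻¹' F).Finite := fun F => by
    rw [← preimage_inter_range]
    exact (finite_inter_range_code_of_sdim_lt_aleph0 u (h𝒜 F F.2)).preimage
      (code_injective u).injOn
  have hcover : (Set.univ : Set (ℕ → Bool)) = ⋃ F : 𝒜, code u ⁻¹' F := by
    rw [← preimage_iUnion, ← sUnion_eq_iUnion, hcov, preimage_univ]
  have h𝒜0 : #𝒜 ≠ 0 := by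
    obtain ⟨F, hF, -⟩ := sUnion_eq_univ_iff.1 hcov fun _ => false
    exact mk_ne_zero_iff.2 ⟨⟨F, hF⟩⟩
  have hle : 2 ^ ℵ₀ ≤ max #𝒜 ℵ₀ := calc
    2 ^ ℵ₀ = #(Set.univ : Set (ℕ → Bool)) := by simp
    _ ≤ #𝒜 * ⨆ F : 𝒜, #(code u ⁻¹' F) := hcover ▸ mk_iUnion_le _
    _ ≤ #𝒜 * ℵ₀ := by gcongr; exact ciSup_le' fun F => (hfin F).lt_aleph0.le
    _ = max #𝒜 ℵ₀ := mul_eq_max_of_aleph0_le_right h𝒜0 le_rfl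
  exact (le_max_iff.1 hle).resolve_right (cantor ℵ₀).not_ge

theorem stringCov_aleph0_aleph0 : StringCov ℵ₀ ℵ₀ = 2 ^ ℵ₀ := by
  have hY : #(Quotient.out ℵ₀) = ℵ₀ := mk_out _
  have : Countable (Quotient.out ℵ₀) := mk_le_aleph0_iff.1 hY.le
  have : Infinite (Quotient.out ℵ₀) := infinite_iff.2 hY.ge
  refine IsLeast.csInf_eq ⟨⟨range fun f => {f}, ?_, ?_, ?_⟩, ?_⟩
  · rw [mk_range_eq _ fun f g => singleton_eq_singleton_iff.1, ← power_def, hY, mk_bool]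
  · rintro _ ⟨f, rfl⟩
    exact sdim_lt_aleph0_of_finite (finite_singleton f)
  · rw [sUnion_range, iUnion_of_singleton]
  · rintro c ⟨𝒜, rfl, h𝒜, hcov⟩
    exact two_power_aleph0_le_mk_of_sUnion_eq_univ h𝒜 hcov

/-- `𝔰𝔡(ℵ₀,ℵ₀) = 2^{ℵ₀}`, and moreover there is a perfect set `X ⊆ 2^ω` in which the
subsets of finite string dimension are exactly the finite subsets. -/
theorem stmt13 :
    StringCov ℵ₀ ℵ₀ = 2 ^ ℵ₀ ∧
    ∃ X : Set (ℕ → Bool), Perfect X ∧ ∀ A ⊆ X, (sdim A < ℵ₀ ↔ A.Finite) := by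
  obtain ⟨u⟩ := nonempty_equiv_of_countable (α := ℕ) (β := LevelPred)
  refine ⟨stringCov_aleph0_aleph0, range (code u), perfect_range_code u, fun A hA => ⟨?_, ?_⟩⟩
  · intro hsdim
    simpa [inter_eq_left.2 hA] using finite_inter_range_code_of_sdim_lt_aleph0 u hsdim
  · exact sdim_lt_aleph0_of_finite
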